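/- Every rational number r has a unique continued fraction expansion r = [e_1, e_2, ..., e_n] with each e_i = ±1, satisfying the 1-regularity condition: e_{n-1}e_n > 0, and whenever e_i e_{i+1} < 0 then e_{i+1} e_{i+2} > 0 (no two consecutive sign changes). -/

import Mathlib

/-!
If `a :: t` is a 1-regular list of signs, then `cf (a :: t)` has the sign of `a`: when the next
entry is `a` this is clear, and when it is `-a` regularity forces a further `-a`, so the value of
the tail has absolute value `> 1` and its reciprocal cannot outweigh `a`. Hence `r` determines
the first entry `a` and `(r - a)⁻¹` the rest, which gives uniqueness. Existence is a subtractive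
Euclidean algorithm: `p / q = [1, q / (p - q)]` for `p > q`, and `p / q = [1, -1, -(q - p) / p]`
for `p < q`, where the last expansion begins with `-1` because `(q - p) / p > 0`.
-/

/-- Evaluation of a finite continued fraction `[a₁, a₂, …, aₙ] = a₁ + 1/(a₂ + 1/(⋯ + 1/aₙ))`. -/
def cf : List ℤ → ℚ
  | [] => 0
  | a :: l => a + (cf l)⁻¹

/-- A continued fraction `[a₁, …, aₙ]` is 1-regular: all entries are nonzero,
`a_{n-1} aₙ > 0`, and there are no two consecutive sign changes. -/
def OneRegular (l : List ℤ) : Prop :=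
  (∀ a ∈ l, a ≠ 0) ∧
  (2 ≤ l.length → 0 < l[l.length - 2]! * l[l.length - 1]!) ∧
  (∀ i, i + 2 < l.length → l[i]! * l[i + 1]! < 0 → 0 < l[i + 1]! * l[i + 2]!)

theorem cf_cons (a : ℤ) (l : List ℤ) : cf (a :: l) = a + (cf l)⁻¹ := rfl

def IsSignList (l : List ℤ) : Prop := ∀ e ∈ l, e = 1 ∨ e = -1

theorem IsSignList.of_cons {a : ℤ} {t : List ℤ} (h : IsSignList (a :: t)) : IsSignList t :=
  fun e he => h e (List.mem_cons_of_mem a he)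

theorem IsSignList.map_neg {l : List ℤ} (h : IsSignList l) : IsSignList (l.map Neg.neg) := by
  simp only [IsSignList, List.forall_mem_map, neg_eq_iff_eq_neg, Int.reduceNeg, neg_neg]
  exact fun e he => (h e he).symm

theorem oneRegular_cons_cons_iff (a b : ℤ) (t : List ℤ) :
    OneRegular (a :: b :: t) ↔
      a ≠ 0 ∧ OneRegular (b :: t) ∧ (0 < a * b ∨ ∃ c t', t = c :: t' ∧ 0 < b * c) := by
  rcases t with _ | ⟨c, t⟩
  · simp [OneRegular, and_assoc]
  · simp only [OneRegular]
    rw [← Nat.and_forall_add_one]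
    simp only [List.forall_mem_cons, List.length_cons]
    have : a * b < 0 ∨ 0 < a * b ↔ a ≠ 0 ∧ b ≠ 0 := by simp [lt_or_lt_iff_ne]
    grind

theorem OneRegular.of_cons {a : ℤ} {t : List ℤ} (h : OneRegular (a :: t)) : OneRegular t := by
  rcases t with _ | ⟨b, t⟩
  · simp [OneRegular]
  · exact ((oneRegular_cons_cons_iff a b t).1 h).2.1

theorem OneRegular.map_neg {l : List ℤ} (h : OneRegular l) : OneRegular (l.map Neg.neg) := by
  have getElem!_map_neg (i : ℕ) : (l.map Neg.neg)[i]! = -l[i]! := by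
    simp only [getElem!_def, List.getElem?_map]
    cases l[i]? <;> simp
  obtain ⟨h₁, h₂, h₃⟩ := h
  refine ⟨?_, ?_, ?_⟩
  · simpa only [List.forall_mem_map, neg_ne_zero]
  all_goals simpa only [getElem!_map_neg, List.length_map, neg_mul_neg]

theorem cf_map_neg (l : List ℤ) : cf (l.map Neg.neg) = -cf l := by
  induction l with
  | nil => simp [cf]
  | cons a t ih => simp only [List.map_cons, cf, ih, inv_neg, Int.cast_neg]; ring

theorem mul_cf_cons {a : ℤ} (ha : a = 1 ∨ a = -1) (l : List ℤ) :
    a * cf (a :: l) = 1 + (a * cf l)⁻¹ := by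
  rcases ha with rfl | rfl <;> (rw [cf_cons]; push_cast; ring)

theorem mul_cf_cons_pos {a : ℤ} {t : List ℤ} (hs : IsSignList (a :: t))
    (hr : OneRegular (a :: t)) : 0 < a * cf (a :: t) := by
  have ha := hs a List.mem_cons_self
  match t, hs, hr with
  | [], _, _ => rcases ha with rfl | rfl <;> norm_num [cf]
  | b :: t', hs, hr =>
    rw [mul_cf_cons ha]
    obtain rfl | rfl : b = a ∨ b = -a := by rcases hs b (by simp) with rfl | rfl <;> omega
    · have := mul_cf_cons_pos hs.of_cons hr.of_cons
      positivity
    · obtain ⟨c, t'', rfl, hc⟩ := ((oneRegular_cons_cons_iff _ _ _).1 hr).2.2.resolve_left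
        (by rcases ha with rfl | rfl <;> norm_num)
      obtain rfl : c = -a := by
        rcases hs c (by simp) with rfl | rfl <;> rcases ha with rfl | rfl <;> omega
      have h := mul_cf_cons_pos hs.of_cons.of_cons hr.of_cons.of_cons
      have htail : 1 < ((-a : ℤ) : ℚ) * cf (-a :: -a :: t'') := by
        rw [mul_cf_cons (by omega)]
        linarith [inv_pos.2 h]
      have hinv : -1 < (a * cf (-a :: -a :: t''))⁻¹ := by
        have := inv_lt_one_of_one_lt₀ (a := -(a * cf (-a :: -a :: t'')))
          (by push_cast at htail; linarith)
        rw [inv_neg] at this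
        linarith
      linarith
termination_by t.length

theorem eq_of_cf_eq {l₁ l₂ : List ℤ} (hs₁ : IsSignList l₁) (hr₁ : OneRegular l₁)
    (hs₂ : IsSignList l₂) (hr₂ : OneRegular l₂) (h : cf l₁ = cf l₂) : l₁ = l₂ := by
  induction l₁ generalizing l₂ with
  | nil =>
    cases l₂ with
    | nil => rfl
    | cons b t₂ =>
      have := mul_cf_cons_pos hs₂ hr₂
      rw [← h] at this
      simp [cf] at this
  | cons a t₁ ih =>
    cases l₂ with
    | nil =>
      have := mul_cf_cons_pos hs₁ hr₁
      rw [h] at this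
      simp [cf] at this
    | cons b t₂ =>
      have ha := mul_cf_cons_pos hs₁ hr₁
      have hb := mul_cf_cons_pos hs₂ hr₂
      obtain rfl : a = b := by
        rw [h] at ha
        rcases hs₁ a (by simp) with rfl | rfl <;> rcases hs₂ b (by simp) with rfl | rfl <;>
          first | rfl | (push_cast at ha hb; linarith)
      have htail : cf t₁ = cf t₂ := inv_injective (add_left_cancel h)
      rw [ih hs₁.of_cons hr₁.of_cons hs₂.of_cons hr₂.of_cons htail]

theorem exists_eq_one_cons_of_cf_pos {l : List ℤ} (hs : IsSignList l) (hr : OneRegular l)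
    (h : 0 < cf l) : ∃ t, l = 1 :: t := by
  rcases l with _ | ⟨a, t⟩
  · simp [cf] at h
  · refine ⟨t, ?_⟩
    have := mul_cf_cons_pos hs hr
    rcases hs a (by simp) with rfl | rfl
    · rfl
    · push_cast at this; linarith

theorem exists_cf_eq_div (p q : ℕ) (hp : 0 < p) (hq : 0 < q) :
    ∃ l, IsSignList l ∧ OneRegular l ∧ cf l = p / q := by
  have hp' : (0 : ℚ) < p := by exact_mod_cast hp
  have hq' : (0 : ℚ) < q := by exact_mod_cast hq
  rcases lt_trichotomy p q with hpq | rfl | hpq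
  · obtain ⟨l, hs, hr, hcf⟩ := exists_cf_eq_div (q - p) p (by omega) hp
    have hqp : (p : ℚ) < q := by exact_mod_cast hpq
    rw [Nat.cast_sub hpq.le] at hcf
    obtain ⟨t, rfl⟩ :=
      exists_eq_one_cons_of_cf_pos hs hr (by rw [hcf]; exact div_pos (by linarith) hp')
    refine ⟨1 :: -1 :: (1 :: t).map Neg.neg, ?_, ?_, ?_⟩
    · simp only [IsSignList, List.forall_mem_cons]
      exact ⟨by norm_num, by norm_num, hs.map_neg⟩
    · have hr' := hr.map_neg
      simp only [List.map_cons, Int.reduceNeg] at hr' ⊢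
      rw [oneRegular_cons_cons_iff, oneRegular_cons_cons_iff]
      exact ⟨by norm_num, ⟨by norm_num, hr', by norm_num⟩, by norm_num⟩
    · have hqp₀ : (q : ℚ) - p ≠ 0 := by linarith
      have hinner : -1 + (-((q - p) / p : ℚ))⁻¹ = -(q / (q - p)) := by field_simp; ring
      push_cast [cf_cons, cf_map_neg, hcf, hinner]
      field_simp
      ring
  · exact ⟨[1], by simp [IsSignList], by simp [OneRegular], by simp [cf, hq'.ne']⟩
  · obtain ⟨l, hs, hr, hcf⟩ := exists_cf_eq_div q (p - q) hq (by omega)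
    have hqp : (q : ℚ) < p := by exact_mod_cast hpq
    rw [Nat.cast_sub hpq.le] at hcf
    obtain ⟨t, rfl⟩ :=
      exists_eq_one_cons_of_cf_pos hs hr (by rw [hcf]; exact div_pos hq' (by linarith))
    refine ⟨1 :: 1 :: t, ?_, ?_, ?_⟩
    · simp only [IsSignList, List.forall_mem_cons] at hs ⊢
      exact ⟨by norm_num, hs⟩
    · rw [oneRegular_cons_cons_iff]
      exact ⟨by norm_num, hr, by norm_num⟩
    · rw [cf_cons, hcf]
      field_simp
      ring
termination_by p + q

theorem exists_cf_eq_of_pos {r : ℚ} (hr : 0 < r) :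
    ∃ l, IsSignList l ∧ OneRegular l ∧ cf l = r := by
  have hnum : 0 < r.num := Rat.num_pos.2 hr
  obtain ⟨l, hl⟩ := exists_cf_eq_div r.num.natAbs r.den (Int.natAbs_pos.2 hnum.ne') r.den_pos
  refine ⟨l, hl.1, hl.2.1, ?_⟩
  rw [hl.2.2, Nat.cast_natAbs, abs_of_pos hnum, Rat.num_div_den]

theorem exists_cf_eq (r : ℚ) : ∃ l, IsSignList l ∧ OneRegular l ∧ cf l = r := by
  rcases lt_trichotomy r 0 with hr | rfl | hr
  · obtain ⟨l, hs, hreg, hcf⟩ := exists_cf_eq_of_pos (neg_pos.2 hr)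
    exact ⟨l.map Neg.neg, hs.map_neg, hreg.map_neg, by rw [cf_map_neg, hcf, neg_neg]⟩
  · exact ⟨[], by simp [IsSignList], by simp [OneRegular], rfl⟩
  · exact exists_cf_eq_of_pos hr

theorem unique_one_regular_pm_one_expansion (r : ℚ) :
    ∃! l : List ℤ, (∀ e ∈ l, e = 1 ∨ e = -1) ∧ OneRegular l ∧ cf l = r := by
  obtain ⟨l, hl⟩ := exists_cf_eq r
  exact ⟨l, hl, fun l' hl' => eq_of_cf_eq hl'.1 hl'.2.1 hl.1 hl.2.1 (hl'.2.2.trans hl.2.2.symm)⟩
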